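/- Let u : ℝⁿ \ B → ℂ be a C² solution of (Δ + λ)u = 0 outside a ball B, λ > 0, satisfying the Sommerfeld radiation condition lim_{|x|→∞} |x|^{(n−1)/2}( (x/|x|)·∇u(x) − i√λ u(x) ) = 0 uniformly in direction. If additionally lim_{R→∞} ∫_{|x|=R} (∂_ν u ū − u ∂_ν ū) dS = 0, then lim_{R→∞} ∫_{|x|=R} |u|² dS = 0. -/

import Mathlib

open MeasureTheory Filter Topology ComplexConjugate

/-! Expanding the square in the radiation condition,
`|∂_ν u - i√λ u|² = |∂_ν u|² + λ |u|² + Re (i√λ (∂_ν u ū - u ∂_ν ū))`, and integrating over the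
sphere of radius `R` gives
`λ ∫ |u|² ≤ ∫ |∂_ν u - i√λ u|² + √λ |∫ (∂_ν u ū - u ∂_ν ū)|`.
After multiplication by `R^{n-1}` the first term on the right tends to `0` because the radiation
condition holds uniformly in the direction, and the second by assumption. -/

/-- The Laplacian of a complex-valued function on `ℝⁿ`. -/
noncomputable def lapC {n : ℕ} (u : EuclideanSpace ℝ (Fin n) → ℂ)
    (x : EuclideanSpace ℝ (Fin n)) : ℂ :=
  ∑ i : Fin n,
    fderiv ℝ (fun y => fderiv ℝ u y (EuclideanSpace.single i 1)) x
      (EuclideanSpace.single i 1)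

theorem norm_sub_I_mul_sq (a b : ℂ) (s : ℝ) :
    ‖a - Complex.I * s * b‖ ^ 2 =
      ‖a‖ ^ 2 + s ^ 2 * ‖b‖ ^ 2 + (Complex.I * s * (a * conj b - b * conj a)).re := by
  simp only [Complex.sq_norm, Complex.normSq_apply, Complex.sub_re, Complex.sub_im,
    Complex.mul_re, Complex.mul_im, Complex.I_re, Complex.I_im, Complex.ofReal_re,
    Complex.ofReal_im, Complex.conj_re, Complex.conj_im]
  ring

section CompactSpace

variable {X : Type*} [TopologicalSpace X] [CompactSpace X] [MeasurableSpace X]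
  [OpensMeasurableSpace X] {μ : Measure X} [IsFiniteMeasure μ]

theorem Continuous.integrable_of_compactSpace {E : Type*} [NormedAddCommGroup E] {f : X → E}
    (hf : Continuous f) : Integrable f μ :=
  hf.integrable_of_hasCompactSupport (HasCompactSupport.of_compactSpace f)

theorem sq_mul_integral_norm_sq_le {a b : X → ℂ} (ha : Continuous a) (hb : Continuous b)
    {s : ℝ} (hs : 0 ≤ s) :
    s ^ 2 * ∫ x, ‖b x‖ ^ 2 ∂μ ≤
      ∫ x, ‖a x - Complex.I * s * b x‖ ^ 2 ∂μ +
        s * ‖∫ x, (a x * conj (b x) - b x * conj (a x)) ∂μ‖ := by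
  set cross := fun x => a x * conj (b x) - b x * conj (a x)
  have hcross : Integrable cross μ :=
    ((ha.mul (Complex.continuous_conj.comp hb)).sub
      (hb.mul (Complex.continuous_conj.comp ha))).integrable_of_compactSpace
  have hD : Integrable (fun x => ‖a x - Complex.I * s * b x‖ ^ 2) μ :=
    ((ha.sub (continuous_const.mul hb)).norm.pow 2).integrable_of_compactSpace
  have hre_integrable : Integrable (fun x => (Complex.I * s * cross x).re) μ :=
    (hcross.const_mul _).re
  have hpointwise : ∀ x, s ^ 2 * ‖b x‖ ^ 2 ≤
      ‖a x - Complex.I * s * b x‖ ^ 2 - (Complex.I * s * cross x).re := fun x => by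
    rw [norm_sub_I_mul_sq]
    nlinarith [sq_nonneg ‖a x‖]
  have hre : -(Complex.I * s * ∫ x, cross x ∂μ).re ≤ s * ‖∫ x, cross x ∂μ‖ := by
    calc -(Complex.I * s * ∫ x, cross x ∂μ).re ≤ ‖Complex.I * s * ∫ x, cross x ∂μ‖ :=
          (neg_le_abs _).trans (Complex.abs_re_le_norm _)
      _ = s * ‖∫ x, cross x ∂μ‖ := by simp [Complex.norm_real, abs_of_nonneg hs]
  calc s ^ 2 * ∫ x, ‖b x‖ ^ 2 ∂μ = ∫ x, s ^ 2 * ‖b x‖ ^ 2 ∂μ := (integral_const_mul _ _).symm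
    _ ≤ ∫ x, (‖a x - Complex.I * s * b x‖ ^ 2 - (Complex.I * s * cross x).re) ∂μ :=
        integral_mono (((hb.norm.pow 2).integrable_of_compactSpace).const_mul _)
          (hD.sub hre_integrable) hpointwise
    _ = ∫ x, ‖a x - Complex.I * s * b x‖ ^ 2 ∂μ - (Complex.I * s * ∫ x, cross x ∂μ).re := by
        rw [integral_sub hD hre_integrable, ← integral_const_mul]
        exact congrArg _ (integral_re (hcross.const_mul _))
    _ ≤ _ := by linarith

end CompactSpace

theorem tendsto_integral_norm_sq_of_tendstoUniformly {X ι E : Type*} [MeasurableSpace X]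
    {μ : Measure X} [IsFiniteMeasure μ] [NormedAddCommGroup E] {l : Filter ι}
    {F : ι → X → E} (hF : TendstoUniformly F 0 l) :
    Tendsto (fun i => ∫ x, ‖F i x‖ ^ 2 ∂μ) l (𝓝 0) := by
  rw [Metric.tendsto_nhds]
  intro ε hε
  set M := μ.real Set.univ
  have hM : 0 ≤ M := measureReal_nonneg
  set δ := Real.sqrt (ε / (2 * (M + 1)))
  have hδ : δ ^ 2 = ε / (2 * (M + 1)) := Real.sq_sqrt (by positivity)
  filter_upwards [Metric.tendstoUniformly_iff.1 hF δ (by positivity)] with i hi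
  have hbound : ∀ x, ‖‖F i x‖ ^ 2‖ ≤ δ ^ 2 := fun x => by
    have := hi x
    rw [Pi.zero_apply, dist_zero_left] at this
    rw [norm_pow, norm_norm]
    exact pow_le_pow_left₀ (norm_nonneg _) this.le 2
  calc dist (∫ x, ‖F i x‖ ^ 2 ∂μ) 0 ≤ δ ^ 2 * M := by
        rw [dist_zero_right]; exact norm_integral_le_of_norm_le_const (ae_of_all _ hbound)
    _ < ε := by
        rw [hδ, div_mul_eq_mul_div, div_lt_iff₀ (by positivity)]
        nlinarith

section Sphere

variable {E F : Type*} [NormedAddCommGroup E] [NormedSpace ℝ E]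
  [NormedAddCommGroup F] [NormedSpace ℝ F]

theorem smul_mem_compl_closedBall_of_mem_sphere {ω : E} (hω : ω ∈ Metric.sphere 0 1)
    {r R : ℝ} (hR : r < R) : R • ω ∈ (Metric.closedBall 0 r)ᶜ := by
  rw [mem_sphere_zero_iff_norm] at hω
  simpa [norm_smul, hω] using hR.trans_le (le_abs_self R)

theorem inv_norm_smul_smul_of_mem_sphere {ω : E} (hω : ω ∈ Metric.sphere 0 1) {R : ℝ}
    (hR : 0 < R) : ‖R • ω‖⁻¹ • R • ω = ω := by
  rw [norm_smul, norm_eq_of_mem_sphere ⟨ω, hω⟩, mul_one, Real.norm_of_nonneg hR.le, smul_smul,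
    inv_mul_cancel₀ hR.ne', one_smul]

theorem continuous_comp_smul_sphere {G : Type*} [TopologicalSpace G] {u : E → G} {r R : ℝ}
    (hu : ContinuousOn u (Metric.ball 0 r)ᶜ) (hR : r < R) :
    Continuous fun ω : Metric.sphere (0 : E) 1 => u (R • (ω : E)) :=
  hu.comp_continuous (continuous_subtype_val.const_smul R) fun ω =>
    Set.compl_subset_compl.2 Metric.ball_subset_closedBall
      (smul_mem_compl_closedBall_of_mem_sphere ω.2 hR)

theorem continuous_fderiv_comp_smul_sphere {u : E → F} {r R : ℝ}
    (hu : ContDiffOn ℝ 1 u (Metric.ball 0 r)ᶜ) (hR : r < R) :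
    Continuous fun ω : Metric.sphere (0 : E) 1 => fderiv ℝ u (R • (ω : E)) ω := by
  have hfderiv : ContinuousOn (fderiv ℝ u) (Metric.closedBall 0 r)ᶜ :=
    (hu.mono (Set.compl_subset_compl.2 Metric.ball_subset_closedBall)).continuousOn_fderiv_of_isOpen
      Metric.isClosed_closedBall.isOpen_compl le_rfl
  exact (hfderiv.comp_continuous (continuous_subtype_val.const_smul R)
    fun ω => smul_mem_compl_closedBall_of_mem_sphere ω.2 hR).clm_apply continuous_subtype_val

theorem sq_mul_integral_norm_sq_comp_smul_sphere_le [ProperSpace E] [MeasurableSpace E]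
    [OpensMeasurableSpace E] {μ : Measure (Metric.sphere (0 : E) 1)} [IsFiniteMeasure μ]
    {u : E → ℂ} {r R s : ℝ} (hu : ContDiffOn ℝ 1 u (Metric.ball 0 r)ᶜ) (hR : r < R)
    (hs : 0 ≤ s) :
    s ^ 2 * ∫ ω, ‖u (R • (ω : E))‖ ^ 2 ∂μ ≤
      ∫ ω, ‖fderiv ℝ u (R • (ω : E)) ω - Complex.I * s * u (R • (ω : E))‖ ^ 2 ∂μ +
        s * ‖∫ ω, (fderiv ℝ u (R • (ω : E)) ω * conj (u (R • (ω : E))) -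
          u (R • (ω : E)) * conj (fderiv ℝ u (R • (ω : E)) ω)) ∂μ‖ :=
  sq_mul_integral_norm_sq_le (continuous_fderiv_comp_smul_sphere hu hR)
    (continuous_comp_smul_sphere hu.continuousOn hR) hs

theorem tendstoUniformly_rpow_smul_comp_smul_sphere {f : E → F} {p : ℝ}
    (hf : ∀ ε > (0 : ℝ), ∃ R₀ : ℝ, ∀ x : E, R₀ ≤ ‖x‖ → ‖x‖ ^ p * ‖f x‖ < ε) :
    TendstoUniformly (fun (R : ℝ) (ω : Metric.sphere (0 : E) 1) => R ^ p • f (R • (ω : E)))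
      0 atTop := by
  rw [Metric.tendstoUniformly_iff]
  intro ε hε
  obtain ⟨R₀, hR₀⟩ := hf ε hε
  filter_upwards [eventually_ge_atTop (max R₀ 0)] with R hR ω
  have hR0 : 0 ≤ R := le_of_max_le_right hR
  have hnorm : ‖R • (ω : E)‖ = R := by
    rw [norm_smul, norm_eq_of_mem_sphere ω, mul_one, Real.norm_of_nonneg hR0]
  have := hR₀ (R • (ω : E)) (by rw [hnorm]; exact le_of_max_le_left hR)
  rw [hnorm] at this
  rwa [Pi.zero_apply, dist_zero_left, norm_smul, Real.norm_of_nonneg (Real.rpow_nonneg hR0 p)]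

theorem tendsto_pow_mul_integral_norm_sq_comp_smul_sphere [MeasurableSpace E]
    {μ : Measure (Metric.sphere (0 : E) 1)} [IsFiniteMeasure μ] {f : E → F} {m : ℕ}
    (hf : ∀ ε > (0 : ℝ), ∃ R₀ : ℝ, ∀ x : E, R₀ ≤ ‖x‖ → ‖x‖ ^ ((m : ℝ) / 2) * ‖f x‖ < ε) :
    Tendsto (fun R : ℝ => R ^ m * ∫ ω, ‖f (R • (ω : E))‖ ^ 2 ∂μ) atTop (𝓝 0) := by
  refine (tendsto_integral_norm_sq_of_tendstoUniformly (μ := μ)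
    (tendstoUniformly_rpow_smul_comp_smul_sphere hf)).congr' ?_
  filter_upwards [eventually_ge_atTop 0] with R hR
  have hpow : (R ^ ((m : ℝ) / 2)) ^ 2 = R ^ m := by
    rw [← Real.rpow_natCast _ 2, ← Real.rpow_mul hR, Nat.cast_ofNat, div_mul_cancel₀ _ two_ne_zero,
      Real.rpow_natCast]
  simp only [norm_smul, mul_pow, Real.norm_of_nonneg (Real.rpow_nonneg hR _), hpow,
    integral_const_mul]

end Sphere

theorem rellich_decay_of_src_general
    {n : ℕ} (hn : 3 ≤ n) (u : EuclideanSpace ℝ (Fin n) → ℂ)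
    (lam : ℝ) (hlam : 0 < lam) (r₀ : ℝ)
    (hu : ContDiffOn ℝ 2 u (Metric.ball (0 : EuclideanSpace ℝ (Fin n)) r₀)ᶜ)
    (hsrc : ∀ ε > (0 : ℝ), ∃ R₀ : ℝ, ∀ x : EuclideanSpace ℝ (Fin n),
      R₀ ≤ ‖x‖ →
        ‖x‖ ^ (((n : ℝ) - 1) / 2) *
          ‖fderiv ℝ u x (‖x‖⁻¹ • x) -
            Complex.I * (Real.sqrt lam : ℂ) * u x‖ < ε)
    (hcross : Tendsto
      (fun R : ℝ => R ^ (n - 1) •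
        ∫ ω : Metric.sphere (0 : EuclideanSpace ℝ (Fin n)) 1,
          (fderiv ℝ u (R • (ω : EuclideanSpace ℝ (Fin n))) (ω : EuclideanSpace ℝ (Fin n)) *
              (starRingEnd ℂ) (u (R • (ω : EuclideanSpace ℝ (Fin n)))) -
            u (R • (ω : EuclideanSpace ℝ (Fin n))) *
              (starRingEnd ℂ)
                (fderiv ℝ u (R • (ω : EuclideanSpace ℝ (Fin n)))
                  (ω : EuclideanSpace ℝ (Fin n))))
          ∂((volume : Measure (EuclideanSpace ℝ (Fin n))).toSphere))
      atTop (nhds 0)) :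
    Tendsto
      (fun R : ℝ => R ^ (n - 1) *
        ∫ ω : Metric.sphere (0 : EuclideanSpace ℝ (Fin n)) 1,
          ‖u (R • (ω : EuclideanSpace ℝ (Fin n)))‖ ^ 2
          ∂((volume : Measure (EuclideanSpace ℝ (Fin n))).toSphere))
      atTop (nhds 0) := by
  set μ := (volume : Measure (EuclideanSpace ℝ (Fin n))).toSphere
  have hsrc_integral : Tendsto (fun R : ℝ => R ^ (n - 1) *
      ∫ ω : Metric.sphere (0 : EuclideanSpace ℝ (Fin n)) 1,
        ‖fderiv ℝ u (R • (ω : EuclideanSpace ℝ (Fin n))) ω -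
          Complex.I * Real.sqrt lam * u (R • (ω : EuclideanSpace ℝ (Fin n)))‖ ^ 2 ∂μ)
      atTop (𝓝 0) := by
    have hexponent : (n : ℝ) - 1 = ((n - 1 : ℕ) : ℝ) := by
      rw [Nat.cast_sub (by omega), Nat.cast_one]
    rw [hexponent] at hsrc
    refine (tendsto_pow_mul_integral_norm_sq_comp_smul_sphere (μ := μ) hsrc).congr' ?_
    filter_upwards [eventually_gt_atTop 0] with R hR
    simp only [fun ω : Metric.sphere (0 : EuclideanSpace ℝ (Fin n)) 1 =>
      inv_norm_smul_smul_of_mem_sphere ω.2 hR]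
  refine tendsto_of_tendsto_of_tendsto_of_le_of_le' tendsto_const_nhds
    (((hsrc_integral.add (hcross.norm.const_mul (Real.sqrt lam))).div_const lam).trans_eq
      (by simp)) ?_ ?_
  · filter_upwards [eventually_ge_atTop 0] with R hR
    exact mul_nonneg (pow_nonneg hR _) (integral_nonneg fun ω => sq_nonneg _)
  · filter_upwards [eventually_gt_atTop (max r₀ 0)] with R hR
    have hRpow : 0 ≤ R ^ (n - 1) := pow_nonneg ((le_max_right r₀ 0).trans hR.le) _
    have h := sq_mul_integral_norm_sq_comp_smul_sphere_le (μ := μ) (hu.of_le one_le_two)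
      ((le_max_left r₀ 0).trans_lt hR) (Real.sqrt_nonneg lam)
    rw [Real.sq_sqrt hlam.le] at h
    rw [le_div_iff₀' hlam, norm_smul, Real.norm_of_nonneg hRpow]
    linarith [mul_le_mul_of_nonneg_left h hRpow]

/-- Rellich-type decay: a radiating solution of `(Δ + λ)u = 0` outside a ball
whose boundary cross term tends to `0` has `∫_{|x|=R} |u|² dS → 0`.  Here the
integral over the sphere of radius `R` is expressed as `R^{n-1}` times an
integral over the unit sphere (with its natural surface measure). -/
theorem rellich_decay_of_src
    {n : ℕ} (hn : 3 ≤ n) (u : EuclideanSpace ℝ (Fin n) → ℂ)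
    (lam : ℝ) (hlam : 0 < lam) (r₀ : ℝ) (hr₀ : 0 < r₀)
    (hu : ContDiffOn ℝ 2 u (Metric.ball (0 : EuclideanSpace ℝ (Fin n)) r₀)ᶜ)
    (hpde : ∀ x ∉ Metric.ball (0 : EuclideanSpace ℝ (Fin n)) r₀,
      lapC u x + (lam : ℂ) * u x = 0)
    (hsrc : ∀ ε > (0 : ℝ), ∃ R₀ : ℝ, ∀ x : EuclideanSpace ℝ (Fin n),
      R₀ ≤ ‖x‖ →
        ‖x‖ ^ (((n : ℝ) - 1) / 2) *
          ‖fderiv ℝ u x (‖x‖⁻¹ • x) -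
            Complex.I * (Real.sqrt lam : ℂ) * u x‖ < ε)
    (hcross : Tendsto
      (fun R : ℝ => R ^ (n - 1) •
        ∫ ω : Metric.sphere (0 : EuclideanSpace ℝ (Fin n)) 1,
          (fderiv ℝ u (R • (ω : EuclideanSpace ℝ (Fin n))) (ω : EuclideanSpace ℝ (Fin n)) *
              (starRingEnd ℂ) (u (R • (ω : EuclideanSpace ℝ (Fin n)))) -
            u (R • (ω : EuclideanSpace ℝ (Fin n))) *
              (starRingEnd ℂ)
                (fderiv ℝ u (R • (ω : EuclideanSpace ℝ (Fin n)))
                  (ω : EuclideanSpace ℝ (Fin n))))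
          ∂((volume : Measure (EuclideanSpace ℝ (Fin n))).toSphere))
      atTop (nhds 0)) :
    Tendsto
      (fun R : ℝ => R ^ (n - 1) *
        ∫ ω : Metric.sphere (0 : EuclideanSpace ℝ (Fin n)) 1,
          ‖u (R • (ω : EuclideanSpace ℝ (Fin n)))‖ ^ 2
          ∂((volume : Measure (EuclideanSpace ℝ (Fin n))).toSphere))
      atTop (nhds 0) :=
  rellich_decay_of_src_general hn u lam hlam r₀ hu hsrc hcross
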